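/- arXiv:1502.00917 — 2 statements merged into one kernel-verified Lean document; each statement's English description precedes it below -/
import Mathlib

section
/- Let N ≥ 2, φ^{(1)},…,φ^{(N−1)} ∈ ℝ, and let (ψ_s) be a solution of the initial-boundary value problem with data g = (g_s). Let p = (t_1,z_1,…,t_N,z_N) ∈ S̄_1, let s ∈ {−1,+1}^N, and set c_k := z_k + s_k t_k. Suppose that for some k ∈ {1,…,N−1} one has c_k > c_{k+1}, while the list obtained from (c_1,…,c_N) by interchanging c_k and c_{k+1} is nondecreasing (i.e. c_1 ≤ ⋯ ≤ c_{k−1} ≤ c_{k+1} and c_k ≤ c_{k+2} ≤ ⋯ ≤ c_N). Then ψ_s(p) = e^{i s_k φ^{(k)}} · g_{τ_k s}(c_1,…,c_{k−1},c_{k+1},c_k,c_{k+2},…,c_N), where τ_k s is s with entries k and k+1 interchanged. (Single-collision case of the explicit solution formula.) -/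
noncomputable section

/-- Sign associated with a Bool: `true ↦ +1`, `false ↦ -1`. -/
def sgn (b : Bool) : ℝ := if b then 1 else -1

/-- `ψ` satisfies the multi-time transport equations for the sign vector `s` on the set `U`:
`∂ψ/∂t_k = s_k · ∂ψ/∂z_k` for every `k`. Points written as `x_k = (t_k, z_k)`. -/
def Transport {N : ℕ} (s : Fin N → ℝ) (U : Set (Fin N → ℝ × ℝ))
    (ψ : (Fin N → ℝ × ℝ) → ℂ) : Prop :=
  ∀ p ∈ U, ∀ k : Fin N,
    fderiv ℝ ψ p (Pi.single k ((1 : ℝ), (0 : ℝ)))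
      = s k • fderiv ℝ ψ p (Pi.single k ((0 : ℝ), (1 : ℝ)))

/-- The set `S₁` of space-like ordered configurations. -/
def S1 (N : ℕ) : Set (Fin N → ℝ × ℝ) :=
  {x | (∀ j k : Fin N, j ≠ k → ((x j).1 - (x k).1) ^ 2 < ((x j).2 - (x k).2) ^ 2) ∧
       ∀ j k : Fin N, j < k → (x j).2 < (x k).2}

/-- The coincidence set `C_{k,k+1}` inside the closure of `S₁` (0-based `k`, `k+1 < N`). -/
def Ckk (N : ℕ) (k : ℕ) (hk : k + 1 < N) : Set (Fin N → ℝ × ℝ) :=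
  {x ∈ closure (S1 N) |
    (x ⟨k, Nat.lt_of_succ_lt hk⟩).1 = (x ⟨k + 1, hk⟩).1 ∧
    (x ⟨k, Nat.lt_of_succ_lt hk⟩).2 = (x ⟨k + 1, hk⟩).2}

/-- A family `(ψ_s)` of functions (indexed by sign vectors `s : Fin N → Bool`) is a
solution of the initial-boundary value problem with phases `φ^{(k)}` and initial data
`(g_s)`, if each `ψ_s` is continuous on the closure of `S₁`, `C¹` on `S₁`, satisfies the
multi-time transport equations for `s` on `S₁`, the boundary conditions
`ψ_s = e^{iφ^{(k)}} ψ_{τ_k s}` on `C_{k,k+1}` (for `s_k = +1`, `s_{k+1} = −1`), and the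
initial conditions `ψ_s(0,z₁,…,0,z_N) = g_s(z₁,…,z_N)` for `z₁ ≤ ⋯ ≤ z_N`. -/
def IsSolution (N : ℕ) (φ : ℕ → ℝ) (g : (Fin N → Bool) → (Fin N → ℝ) → ℂ)
    (ψ : (Fin N → Bool) → (Fin N → ℝ × ℝ) → ℂ) : Prop :=
  (∀ s, ContinuousOn (ψ s) (closure (S1 N))) ∧
  (∀ s, ContDiffOn ℝ 1 (ψ s) (S1 N)) ∧
  (∀ s, Transport (fun k => sgn (s k)) (S1 N) (ψ s)) ∧
  (∀ (k : ℕ) (hk : k + 1 < N) (s : Fin N → Bool),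
    s ⟨k, Nat.lt_of_succ_lt hk⟩ = true → s ⟨k + 1, hk⟩ = false →
    ∀ p ∈ Ckk N k hk,
      ψ s p = Complex.exp (Complex.I * (φ k : ℂ)) *
        ψ (s ∘ Equiv.swap ⟨k, Nat.lt_of_succ_lt hk⟩ ⟨k + 1, hk⟩) p) ∧
  (∀ s, ∀ z : Fin N → ℝ, (∀ i j : Fin N, i ≤ j → z i ≤ z j) →
    ψ s (fun k => ((0 : ℝ), z k)) = g s z)

/-!
The solution `ψ_s` is constant on every segment in `S₁` along which all characteristic values
`c_m = z_m + s_m t_m` stay fixed, because the transport equations kill its derivative in such a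
direction. Starting from `p`, move particles `k` and `k + 1` along their characteristics until
they meet at a point `a`; since `c_k > c_{k+1}` their signs differ, so the boundary condition at
the collision turns `ψ_s` into `e^{i s_k φ^{(k)}} ψ_{τ_k s}`. The collision configuration has the
same `τ_k s`-characteristic values as the time-zero configuration `(0, c_{τ_k m})`, and a second
segment leads to the initial data. `S₁` is convex, so both segments lie in `S₁` when `p ∈ S₁` and
the swapped values increase strictly; the general case follows by continuity.
-/

open Filter Topology Function Set

def charVal (b : Bool) (a : ℝ × ℝ) : ℝ := a.2 + sgn b * a.1

@[simp] lemma charVal_true (a : ℝ × ℝ) : charVal true a = a.2 + a.1 := by simp [charVal, sgn]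

@[simp] lemma charVal_false (a : ℝ × ℝ) : charVal false a = a.2 - a.1 := by
  simp [charVal, sgn]; ring

@[simp] lemma charVal_zero_fst (b : Bool) (z : ℝ) : charVal b (0, z) = z := by simp [charVal]

lemma exists_charVal_eq (f : Bool → ℝ) : ∃ a, ∀ b, charVal b a = f b :=
  ⟨((f true - f false) / 2, (f true + f false) / 2), fun b => by cases b <;> simp <;> ring⟩

variable {N : ℕ}

def charVals (s : Fin N → Bool) (x : Fin N → ℝ × ℝ) (m : Fin N) : ℝ := charVal (s m) (x m)

def atTimeZero (z : Fin N → ℝ) (m : Fin N) : ℝ × ℝ := (0, z m)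

@[simp] lemma charVals_atTimeZero (s : Fin N → Bool) (z : Fin N → ℝ) :
    charVals s (atTimeZero z) = z := by
  ext m; simp [charVals, atTimeZero]

lemma mem_S1_iff {x : Fin N → ℝ × ℝ} :
    x ∈ S1 N ↔ ∀ i j, i < j → ∀ b, charVal b (x i) < charVal b (x j) := by
  constructor
  · rintro ⟨hsq, hz⟩ i j hij b
    have hsq' : ((x i).1 - (x j).1) ^ 2 < ((x j).2 - (x i).2) ^ 2 :=
      (hsq i j hij.ne).trans_eq (by ring)
    obtain ⟨h1, h2⟩ := abs_lt_of_sq_lt_sq' hsq' (sub_nonneg.2 (hz i j hij).le)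
    cases b <;> simp <;> linarith
  · intro h
    have hlt : ∀ i j, i < j →
        ((x i).1 - (x j).1) ^ 2 < ((x i).2 - (x j).2) ^ 2 ∧ (x i).2 < (x j).2 := by
      intro i j hij
      have h1 := h i j hij true
      have h2 := h i j hij false
      simp only [charVal_true, charVal_false] at h1 h2
      exact ⟨by nlinarith [mul_pos (sub_pos.2 h1) (sub_pos.2 h2)], by linarith⟩
    refine ⟨fun i j hij => ?_, fun i j hij => (hlt i j hij).2⟩
    rcases hij.lt_or_gt with hij | hij
    · exact (hlt i j hij).1
    · linarith [(hlt j i hij).1]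

def stagger (N : ℕ) : Fin N → ℝ × ℝ := fun m => (0, ((m : ℕ) : ℝ))

lemma charVal_add_smul_stagger (x : Fin N → ℝ × ℝ) (ε : ℝ) (b : Bool) (m : Fin N) :
    charVal b ((x + ε • stagger N) m) = charVal b (x m) + ε * (m : ℕ) := by
  simp [charVal, stagger]; ring

lemma charVals_add_smul_stagger (s : Fin N → Bool) (x : Fin N → ℝ × ℝ) (ε : ℝ) (m : Fin N) :
    charVals s (x + ε • stagger N) m = charVals s x m + ε * (m : ℕ) :=
  charVal_add_smul_stagger x ε (s m) m

lemma add_smul_stagger_mem_S1 {x : Fin N → ℝ × ℝ}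
    (hx : ∀ i j, i < j → ∀ b, charVal b (x i) ≤ charVal b (x j)) {ε : ℝ} (hε : 0 < ε) :
    x + ε • stagger N ∈ S1 N := by
  refine mem_S1_iff.2 fun i j hij b => ?_
  rw [charVal_add_smul_stagger, charVal_add_smul_stagger]
  have hij' : ((i : ℕ) : ℝ) < (j : ℕ) := by exact_mod_cast hij
  nlinarith [hx i j hij b]

lemma tendsto_add_smul_stagger (x : Fin N → ℝ × ℝ) :
    Tendsto (fun ε : ℝ => x + ε • stagger N) (𝓝[>] 0) (𝓝 x) :=
  ((continuous_const.add (continuous_id.smul continuous_const)).tendsto' 0 x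
    (by simp)).mono_left nhdsWithin_le_nhds

lemma mem_closure_S1_iff {x : Fin N → ℝ × ℝ} :
    x ∈ closure (S1 N) ↔ ∀ i j, i < j → ∀ b, charVal b (x i) ≤ charVal b (x j) := by
  constructor
  · intro hx i j hij b
    have hcl : IsClosed {y : Fin N → ℝ × ℝ | charVal b (y i) ≤ charVal b (y j)} :=
      isClosed_le (by unfold charVal; fun_prop) (by unfold charVal; fun_prop)
    exact closure_minimal (fun y hy => (mem_S1_iff.1 hy i j hij b).le) hcl hx
  · intro hx
    exact mem_closure_of_tendsto (tendsto_add_smul_stagger x)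
      (eventually_nhdsWithin_of_forall fun ε hε => add_smul_stagger_mem_S1 hx hε)

lemma isOpen_S1 : IsOpen (S1 N) := by
  have : S1 N = ⋂ i, ⋂ j, ⋂ (_ : i < j), ⋂ b, {x | charVal b (x i) < charVal b (x j)} := by
    ext x; simp [mem_S1_iff]
  rw [this]
  exact isOpen_iInter_of_finite fun i => isOpen_iInter_of_finite fun j =>
    isOpen_iInter_of_finite fun _ => isOpen_iInter_of_finite fun b =>
      isOpen_lt (by unfold charVal; fun_prop) (by unfold charVal; fun_prop)

lemma convex_S1 : Convex ℝ (S1 N) := by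
  intro x hx y hy μ ν hμ hν hμν
  rw [mem_S1_iff] at hx hy ⊢
  intro i j hij b
  have hlin : ∀ m, charVal b ((μ • x + ν • y) m) =
      μ * charVal b (x m) + ν * charVal b (y m) := by
    intro m; simp [charVal]; ring
  rw [hlin, hlin]
  rcases hμ.lt_or_eq with hμ | rfl
  · nlinarith [mul_pos hμ (sub_pos.2 (hx i j hij b)),
      mul_nonneg hν (sub_pos.2 (hy i j hij b)).le]
  · rw [zero_add] at hμν
    subst hμν
    simpa using hy i j hij b

lemma openSegment_subset_S1 {x y : Fin N → ℝ × ℝ} (hx : x ∈ S1 N) (hy : y ∈ closure (S1 N)) :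
    openSegment ℝ x y ⊆ S1 N := by
  simpa only [isOpen_S1.interior_eq] using
    convex_S1.openSegment_interior_closure_subset_interior (isOpen_S1.interior_eq.symm ▸ hx) hy

lemma atTimeZero_mem_S1 {z : Fin N → ℝ} (hz : StrictMono z) : atTimeZero z ∈ S1 N :=
  mem_S1_iff.2 fun _ _ hij _ => by simpa [atTimeZero] using hz hij

lemma atTimeZero_mem_closure_S1 {z : Fin N → ℝ} (hz : Monotone z) :
    atTimeZero z ∈ closure (S1 N) :=
  mem_closure_S1_iff.2 fun _ _ hij _ => by simpa [atTimeZero] using hz hij.le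

lemma Transport.fderiv_eq_zero {sv : Fin N → ℝ} {U : Set (Fin N → ℝ × ℝ)}
    {ψ : (Fin N → ℝ × ℝ) → ℂ} (h : Transport sv U ψ) {p : Fin N → ℝ × ℝ} (hp : p ∈ U)
    {v : Fin N → ℝ × ℝ} (hv : ∀ m, (v m).2 + sv m * (v m).1 = 0) : fderiv ℝ ψ p v = 0 := by
  rw [← Finset.univ_sum_single v, map_sum]
  refine Finset.sum_eq_zero fun m _ => ?_
  have hvm : Pi.single m (v m) = (v m).1 • (Pi.single m (1, 0) : Fin N → ℝ × ℝ)
      - ((v m).1 * sv m) • (Pi.single m (0, 1) : Fin N → ℝ × ℝ) := by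
    ext i : 1
    rcases eq_or_ne i m with rfl | hi
    · ext <;> simp; linarith [hv i]
    · simp [hi]
  rw [hvm, map_sub, map_smul, map_smul, h p hp m, smul_smul, sub_self]

theorem eq_of_charVals_eq {s : Fin N → Bool} {ψ : (Fin N → ℝ × ℝ) → ℂ}
    (hcont : ContinuousOn ψ (closure (S1 N))) (hC1 : ContDiffOn ℝ 1 ψ (S1 N))
    (htr : Transport (fun m => sgn (s m)) (S1 N) ψ) {x y : Fin N → ℝ × ℝ} (hx : x ∈ S1 N)
    (hy : y ∈ closure (S1 N)) (hxy : charVals s x = charVals s y) : ψ x = ψ y := by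
  set f : ℝ → ℂ := fun μ => ψ (AffineMap.lineMap x y μ)
  have hseg : ∀ μ ∈ Ioo (0 : ℝ) 1, AffineMap.lineMap x y μ ∈ S1 N := fun μ hμ =>
    openSegment_subset_S1 hx hy (openSegment_eq_image_lineMap ℝ x y ▸ mem_image_of_mem _ hμ)
  have hderiv : ∀ μ ∈ Ioo (0 : ℝ) 1, HasDerivAt f 0 μ := by
    intro μ hμ
    have hd : DifferentiableAt ℝ ψ (AffineMap.lineMap x y μ) :=
      (hC1.contDiffAt (isOpen_S1.mem_nhds (hseg μ hμ))).differentiableAt one_ne_zero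
    have := hd.hasFDerivAt.comp_hasDerivAt μ AffineMap.hasDerivAt_lineMap
    rwa [htr.fderiv_eq_zero (hseg μ hμ) fun m => ?_] at this
    have := congrFun hxy m
    simp only [charVals, charVal] at this
    simp only [Pi.sub_apply, Prod.fst_sub, Prod.snd_sub]
    linarith
  obtain ⟨c, hc⟩ := isOpen_Ioo.exists_is_const_of_deriv_eq_zero isPreconnected_Ioo
    (fun μ hμ => (hderiv μ hμ).differentiableAt.differentiableWithinAt)
    (fun μ hμ => (hderiv μ hμ).deriv)
  have hfcont : ContinuousOn f (Icc 0 1) :=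
    hcont.comp AffineMap.lineMap_continuous.continuousOn fun μ hμ =>
      convex_S1.closure.segment_subset (subset_closure hx) hy
        (segment_eq_image_lineMap ℝ x y ▸ mem_image_of_mem _ hμ)
  have hconst : EqOn f (fun _ => c) (Icc 0 1) :=
    EqOn.of_subset_closure hc hfcont continuousOn_const Ioo_subset_Icc_self
      (closure_Ioo zero_ne_one).ge
  simpa [f] using (hconst (left_mem_Icc.2 zero_le_one)).trans
    (hconst (right_mem_Icc.2 zero_le_one)).symm

lemma ne_of_charVals_lt {x : Fin N → ℝ × ℝ} (hx : x ∈ closure (S1 N)) {i j : Fin N}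
    (hij : i < j) {s : Fin N → Bool} (h : charVals s x j < charVals s x i) : s i ≠ s j := by
  intro hs
  simp only [charVals, hs] at h
  exact (mem_closure_S1_iff.1 hx i j hij (s j)).not_gt h

lemma update_update_mem_closure_S1 {x : Fin N → ℝ × ℝ} (hx : x ∈ closure (S1 N))
    {κ κ' : Fin N} (hadj : (κ' : ℕ) = κ + 1) {a : ℝ × ℝ}
    (ha : ∀ b, charVal b a = charVal b (x κ) ∨ charVal b a = charVal b (x κ')) :
    update (update x κ a) κ' a ∈ closure (S1 N) := by
  rw [mem_closure_S1_iff] at hx ⊢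
  intro i j hij b
  have hκκ' : κ < κ' := by rw [Fin.lt_def]; omega
  have hlo : charVal b (x κ) ≤ charVal b a := by
    rcases ha b with h | h <;> rw [h]; exact hx κ κ' hκκ' b
  have hhi : charVal b a ≤ charVal b (x κ') := by
    rcases ha b with h | h <;> rw [h]; exact hx κ κ' hκκ' b
  have hij' := Fin.lt_def.1 hij
  simp only [update_apply, Fin.ext_iff]
  split_ifs <;> first
    | exact le_rfl
    | exact hx i j hij b
    | exact (hx i κ (Fin.lt_def.2 (by omega)) b).trans hlo
    | exact hhi.trans (hx κ' j (Fin.lt_def.2 (by omega)) b)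

lemma swap_lt_swap_of_adjacent {κ κ' i j : Fin N} (hadj : (κ' : ℕ) = κ + 1) (hij : i < j)
    (hne : ¬(i = κ ∧ j = κ')) : Equiv.swap κ κ' i < Equiv.swap κ κ' j := by
  rw [Fin.lt_def] at hij ⊢
  simp only [Fin.ext_iff] at hne
  simp only [Equiv.swap_apply_def]
  split_ifs <;> simp only [Fin.ext_iff] at * <;> omega

lemma strictMono_add_mul_swap {κ κ' : Fin N} (hadj : (κ' : ℕ) = κ + 1) {c : Fin N → ℝ}
    (hc : Monotone (c ∘ Equiv.swap κ κ')) {ε : ℝ} (hε : 0 < ε) (hε' : ε < c κ - c κ') :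
    StrictMono fun m => c (Equiv.swap κ κ' m) + ε * (Equiv.swap κ κ' m : ℕ) := by
  intro i j hij
  by_cases hne : i = κ ∧ j = κ'
  · obtain ⟨rfl, rfl⟩ := hne
    simp only [Equiv.swap_apply_left, Equiv.swap_apply_right, hadj]
    push_cast
    linarith
  · have hswap : ((Equiv.swap κ κ' i : ℕ) : ℝ) < (Equiv.swap κ κ' j : ℕ) := by
      exact_mod_cast swap_lt_swap_of_adjacent hadj hij hne
    have hcij : c (Equiv.swap κ κ' i) ≤ c (Equiv.swap κ κ' j) := hc hij.le
    dsimp only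
    nlinarith

section Collision

variable {k : ℕ} (hk : k + 1 < N) {φ : ℕ → ℝ} {g : (Fin N → Bool) → (Fin N → ℝ) → ℂ}
  {ψ : (Fin N → Bool) → (Fin N → ℝ × ℝ) → ℂ}

local notation "κ" => Fin.mk k (Nat.lt_of_succ_lt hk)
local notation "κ'" => Fin.mk (k + 1) hk

lemma IsSolution.boundary_phase (hψ : IsSolution N φ g ψ) {s : Fin N → Bool}
    (hs : s κ ≠ s κ') {q : Fin N → ℝ × ℝ} (hq : q ∈ Ckk N k hk) :
    ψ s q = Complex.exp (Complex.I * ((sgn (s κ) * φ k : ℝ) : ℂ)) *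
      ψ (s ∘ Equiv.swap κ κ') q := by
  cases hsκ : s κ
  · have hsκ' : s κ' = true := by simpa [hsκ] using hs.symm
    have hbc := hψ.2.2.2.1 k hk (s ∘ Equiv.swap κ κ') (by simpa using hsκ')
      (by simpa using hsκ) q hq
    have hss : (s ∘ Equiv.swap κ κ') ∘ Equiv.swap κ κ' = s := by ext m; simp
    rw [hss] at hbc
    rw [hbc, ← mul_assoc, ← Complex.exp_add]
    simp [sgn]
  · have hsκ' : s κ' = false := by simpa [hsκ] using hs.symm
    rw [hψ.2.2.2.1 k hk s hsκ hsκ' q hq]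
    simp [sgn]

theorem IsSolution.apply_eq_phase_mul_of_mem_S1 (hψ : IsSolution N φ g ψ)
    {s : Fin N → Bool} {p : Fin N → ℝ × ℝ} (hp : p ∈ S1 N)
    (hcoll : charVals s p κ' < charVals s p κ)
    (hsorted : StrictMono (charVals s p ∘ Equiv.swap κ κ')) :
    ψ s p = Complex.exp (Complex.I * ((sgn (s κ) * φ k : ℝ) : ℂ)) *
      ψ (s ∘ Equiv.swap κ κ') (atTimeZero (charVals s p ∘ Equiv.swap κ κ')) := by
  have hκκ' : (κ : Fin N) < κ' := Fin.mk_lt_mk.2 k.lt_succ_self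
  have hs : s κ ≠ s κ' := ne_of_charVals_lt (subset_closure hp) hκκ' hcoll
  obtain ⟨a, ha⟩ :=
    exists_charVal_eq fun b => if b = s κ then charVal b (p κ) else charVal b (p κ')
  have haκ : charVal (s κ) a = charVal (s κ) (p κ) := by simp [ha]
  have haκ' : charVal (s κ') a = charVal (s κ') (p κ') := by simp [ha, hs.symm]
  set q := update (update p κ a) κ' a
  have hq : q ∈ closure (S1 N) :=
    update_update_mem_closure_S1 (subset_closure hp) rfl fun b => by
      rw [ha]; split_ifs <;> simp
  have hqC : q ∈ Ckk N k hk := ⟨hq, by simp [q, hκκ'.ne], by simp [q, hκκ'.ne]⟩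
  have hpq : charVals s p = charVals s q := by
    ext m
    simp only [charVals, q, update_apply]
    split_ifs <;> subst_vars <;> simp [haκ, haκ']
  have hrq : charVals (s ∘ Equiv.swap κ κ') (atTimeZero (charVals s p ∘ Equiv.swap κ κ')) =
      charVals (s ∘ Equiv.swap κ κ') q := by
    rw [charVals_atTimeZero]
    ext m
    simp only [charVals, comp_apply, q, update_apply, Equiv.swap_apply_def]
    split_ifs <;> subst_vars <;> simp [haκ, haκ']
  rw [eq_of_charVals_eq (hψ.1 s) (hψ.2.1 s) (hψ.2.2.1 s) hp hq hpq, hψ.boundary_phase hk hs hqC,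
    eq_of_charVals_eq (hψ.1 _) (hψ.2.1 _) (hψ.2.2.1 _) (atTimeZero_mem_S1 hsorted) hq hrq]

theorem IsSolution.apply_eq_phase_mul (hψ : IsSolution N φ g ψ) {s : Fin N → Bool}
    {p : Fin N → ℝ × ℝ} (hp : p ∈ closure (S1 N)) (hcoll : charVals s p κ' < charVals s p κ)
    (hsorted : Monotone (charVals s p ∘ Equiv.swap κ κ')) :
    ψ s p = Complex.exp (Complex.I * ((sgn (s κ) * φ k : ℝ) : ℂ)) *
      ψ (s ∘ Equiv.swap κ κ') (atTimeZero (charVals s p ∘ Equiv.swap κ κ')) := by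
  -- shifting particle `m` up by `ε m` puts `p` into `S₁` and separates equal swapped values
  let P : ℝ → Fin N → ℝ × ℝ := fun ε => p + ε • stagger N
  let R : (Fin N → ℝ × ℝ) → Fin N → ℝ × ℝ := fun x => atTimeZero (charVals s x ∘ Equiv.swap κ κ')
  have hsmall : ∀ᶠ ε in 𝓝[>] (0 : ℝ), ε ∈ Ioo 0 (charVals s p κ - charVals s p κ') :=
    Ioo_mem_nhdsGT (sub_pos.2 hcoll)
  have hPS : ∀ᶠ ε in 𝓝[>] (0 : ℝ), P ε ∈ S1 N :=
    hsmall.mono fun ε hε => add_smul_stagger_mem_S1 (mem_closure_S1_iff.1 hp) hε.1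
  have hmono : ∀ᶠ ε in 𝓝[>] (0 : ℝ), StrictMono (charVals s (P ε) ∘ Equiv.swap κ κ') := by
    filter_upwards [hsmall] with ε hε
    have hP : charVals s (P ε) ∘ Equiv.swap κ κ' =
        fun m => charVals s p (Equiv.swap κ κ' m) + ε * (Equiv.swap κ κ' m : ℕ) := by
      ext m; exact charVals_add_smul_stagger s p ε _
    rw [hP]
    exact strictMono_add_mul_swap rfl hsorted hε.1 hε.2
  have heq : ∀ᶠ ε in 𝓝[>] (0 : ℝ), ψ s (P ε) =
      Complex.exp (Complex.I * ((sgn (s κ) * φ k : ℝ) : ℂ)) *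
        ψ (s ∘ Equiv.swap κ κ') (R (P ε)) := by
    filter_upwards [hsmall, hPS, hmono] with ε hε hPε hmonoε
    refine hψ.apply_eq_phase_mul_of_mem_S1 hk hPε ?_ hmonoε
    rw [charVals_add_smul_stagger, charVals_add_smul_stagger]
    push_cast
    linarith [hε.2]
  have hP : Tendsto P (𝓝[>] 0) (𝓝 p) := tendsto_add_smul_stagger p
  have hR : Continuous R := continuous_pi fun m => by
    simp only [R, atTimeZero, charVals, charVal, comp_apply]; fun_prop
  have hlimL : Tendsto (fun ε => ψ s (P ε)) (𝓝[>] 0) (𝓝 (ψ s p)) :=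
    (hψ.1 s p hp).tendsto.comp <|
      tendsto_nhdsWithin_iff.2 ⟨hP, hPS.mono fun _ h => subset_closure h⟩
  have hlimR : Tendsto (fun ε => ψ (s ∘ Equiv.swap κ κ') (R (P ε))) (𝓝[>] 0)
      (𝓝 (ψ (s ∘ Equiv.swap κ κ') (R p))) :=
    (hψ.1 _ _ (atTimeZero_mem_closure_S1 hsorted)).tendsto.comp <| tendsto_nhdsWithin_iff.2
      ⟨(hR.tendsto p).comp hP, hmono.mono fun _ h => subset_closure (atTimeZero_mem_S1 h)⟩
  exact tendsto_nhds_unique (hlimL.congr' heq) (hlimR.const_mul _)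

end Collision

theorem stmt13_general (N : ℕ) (φ : ℕ → ℝ)
    (g : (Fin N → Bool) → (Fin N → ℝ) → ℂ)
    (ψ : (Fin N → Bool) → (Fin N → ℝ × ℝ) → ℂ)
    (hψ : IsSolution N φ g ψ)
    (p : Fin N → ℝ × ℝ) (hp : p ∈ closure (S1 N)) (s : Fin N → Bool)
    (k : ℕ) (hk : k + 1 < N)
    (hcoll : (p ⟨k, Nat.lt_of_succ_lt hk⟩).2
          + sgn (s ⟨k, Nat.lt_of_succ_lt hk⟩) * (p ⟨k, Nat.lt_of_succ_lt hk⟩).1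
        > (p ⟨k + 1, hk⟩).2 + sgn (s ⟨k + 1, hk⟩) * (p ⟨k + 1, hk⟩).1)
    (hsorted : ∀ i j : Fin N, i ≤ j →
      (fun m => (p (Equiv.swap ⟨k, Nat.lt_of_succ_lt hk⟩ ⟨k + 1, hk⟩ m)).2
          + sgn (s (Equiv.swap ⟨k, Nat.lt_of_succ_lt hk⟩ ⟨k + 1, hk⟩ m))
            * (p (Equiv.swap ⟨k, Nat.lt_of_succ_lt hk⟩ ⟨k + 1, hk⟩ m)).1) i
        ≤ (fun m => (p (Equiv.swap ⟨k, Nat.lt_of_succ_lt hk⟩ ⟨k + 1, hk⟩ m)).2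
          + sgn (s (Equiv.swap ⟨k, Nat.lt_of_succ_lt hk⟩ ⟨k + 1, hk⟩ m))
            * (p (Equiv.swap ⟨k, Nat.lt_of_succ_lt hk⟩ ⟨k + 1, hk⟩ m)).1) j) :
    ψ s p = Complex.exp (Complex.I * ((sgn (s ⟨k, Nat.lt_of_succ_lt hk⟩) * φ k : ℝ) : ℂ)) *
      g (s ∘ Equiv.swap ⟨k, Nat.lt_of_succ_lt hk⟩ ⟨k + 1, hk⟩)
        (fun m => (p (Equiv.swap ⟨k, Nat.lt_of_succ_lt hk⟩ ⟨k + 1, hk⟩ m)).2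
          + sgn (s (Equiv.swap ⟨k, Nat.lt_of_succ_lt hk⟩ ⟨k + 1, hk⟩ m))
            * (p (Equiv.swap ⟨k, Nat.lt_of_succ_lt hk⟩ ⟨k + 1, hk⟩ m)).1) := by
  rw [hψ.apply_eq_phase_mul hk hp hcoll fun i j hij => hsorted i j hij]
  exact congrArg _ (hψ.2.2.2.2 _ _ hsorted)

/-- single-collision case of the explicit solution formula: if `(ψ_s)`
solves the initial-boundary value problem with data `g`, `p ∈ closure S₁`, the
characteristic values `c_k = z_k + s_k t_k` satisfy `c_k > c_{k+1}` for one `k`, and the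
list obtained by interchanging `c_k` and `c_{k+1}` is nondecreasing, then
`ψ_s(p) = e^{i s_k φ^{(k)}} g_{τ_k s}(c₁,…,c_{k+1},c_k,…,c_N)`. (0-based `k`, `k+1 < N`.) -/
theorem stmt13 (N : ℕ) (hN : 2 ≤ N) (φ : ℕ → ℝ)
    (g : (Fin N → Bool) → (Fin N → ℝ) → ℂ)
    (ψ : (Fin N → Bool) → (Fin N → ℝ × ℝ) → ℂ)
    (hψ : IsSolution N φ g ψ)
    (p : Fin N → ℝ × ℝ) (hp : p ∈ closure (S1 N)) (s : Fin N → Bool)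
    (k : ℕ) (hk : k + 1 < N)
    (hcoll : (p ⟨k, Nat.lt_of_succ_lt hk⟩).2
          + sgn (s ⟨k, Nat.lt_of_succ_lt hk⟩) * (p ⟨k, Nat.lt_of_succ_lt hk⟩).1
        > (p ⟨k + 1, hk⟩).2 + sgn (s ⟨k + 1, hk⟩) * (p ⟨k + 1, hk⟩).1)
    (hsorted : ∀ i j : Fin N, i ≤ j →
      (fun m => (p (Equiv.swap ⟨k, Nat.lt_of_succ_lt hk⟩ ⟨k + 1, hk⟩ m)).2
          + sgn (s (Equiv.swap ⟨k, Nat.lt_of_succ_lt hk⟩ ⟨k + 1, hk⟩ m))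
            * (p (Equiv.swap ⟨k, Nat.lt_of_succ_lt hk⟩ ⟨k + 1, hk⟩ m)).1) i
        ≤ (fun m => (p (Equiv.swap ⟨k, Nat.lt_of_succ_lt hk⟩ ⟨k + 1, hk⟩ m)).2
          + sgn (s (Equiv.swap ⟨k, Nat.lt_of_succ_lt hk⟩ ⟨k + 1, hk⟩ m))
            * (p (Equiv.swap ⟨k, Nat.lt_of_succ_lt hk⟩ ⟨k + 1, hk⟩ m)).1) j) :
    ψ s p = Complex.exp (Complex.I * ((sgn (s ⟨k, Nat.lt_of_succ_lt hk⟩) * φ k : ℝ) : ℂ)) *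
      g (s ∘ Equiv.swap ⟨k, Nat.lt_of_succ_lt hk⟩ ⟨k + 1, hk⟩)
        (fun m => (p (Equiv.swap ⟨k, Nat.lt_of_succ_lt hk⟩ ⟨k + 1, hk⟩ m)).2
          + sgn (s (Equiv.swap ⟨k, Nat.lt_of_succ_lt hk⟩ ⟨k + 1, hk⟩ m))
            * (p (Equiv.swap ⟨k, Nat.lt_of_succ_lt hk⟩ ⟨k + 1, hk⟩ m)).1) :=
  stmt13_general N φ g ψ hψ p hp s k hk hcoll hsorted
end
end

section
/- Let α > 0, φ ∈ ℝ, and let g = (g_{s_1 s_2})_{(s_1,s_2) ∈ {−1,+1}²} be functions g_{s_1 s_2} : {(z_1,z_2) ∈ ℝ² : |z_1 − z_2| > α} → ℂ. Suppose there exist real numbers a_1 < b_1 < a_2 < b_2 with a_2 − a_1 > α and b_2 − b_1 > α such that g_{+−}(a_1,a_2) ≠ g_{+−}(b_1,b_2) or g_{−+}(a_1,a_2) ≠ g_{−+}(b_1,b_2). Then there exists no family (ψ_{s_1 s_2}) of functions ψ_{s_1 s_2} : S̄_α → ℂ that are continuous on S̄_α and continuously differentiable on S_α, satisfy the multi-time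 transport equations for (s_1,s_2) on S_α, satisfy the boundary condition ψ_{+−}(p) = e^{iφ} ψ_{−+}(p) for all p ∈ ∂S_α, and satisfy the initial condition ψ_{s_1 s_2}(0,z_1,0,z_2) = g_{s_1 s_2}(z_1,z_2) for all (z_1,z_2) with |z_1 − z_2| > α. (Non-existence of dynamics on the configurations with a minimal space-like distance α.) -/
/-!
In light-cone coordinates `u = z + t`, `v = z - t` a solution of the `+−` transport equations
depends only on `(u₁, v₂)` and a solution of the `−+` equations only on `(v₁, u₂)`, while `S_α` is
`(u₂ - u₁)(v₂ - v₁) > α²`. Following the characteristics back from the initial configurations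
`(c₁, c₂)` of `ψ_{+−}` and `(d₁, d₂)` of `ψ_{−+}` to the boundary point with `u₁ = c₁`,
`v₂ = c₂`, `v₁ = d₁`, `u₂ = d₂`, the boundary condition gives
`g_{+−}(c₁, c₂) = e^{iφ} g_{−+}(d₁, d₂)` whenever `(d₂ - c₁)(c₂ - d₁) = α²`. Two such relations
sharing `(d₁, d₂)` show that `g_{+−}` is invariant under large translations, hence under all of
them, and one more relation of the family then identifies every value of `g_{+−}` with every
value of `e^{iφ} g_{−+}`.
-/

noncomputable section

/-- The set `S_α` of `α`-space-like two-particle configurations: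
`(t₁−t₂)² − (z₁−z₂)² < −α²`. -/
def Salpha (α : ℝ) : Set (Fin 2 → ℝ × ℝ) :=
  {x | ((x 0).1 - (x 1).1) ^ 2 - ((x 0).2 - (x 1).2) ^ 2 < -α ^ 2}

/-- The boundary `∂S_α`: configurations with `(t₁−t₂)² − (z₁−z₂)² = −α²`. -/
def bdrySalpha (α : ℝ) : Set (Fin 2 → ℝ × ℝ) :=
  {x | ((x 0).1 - (x 1).1) ^ 2 - ((x 0).2 - (x 1).2) ^ 2 = -α ^ 2}

open Set AffineMap

theorem eq_of_fderiv_apply_sub_eq_zero {E F : Type*} [NormedAddCommGroup E] [NormedSpace ℝ E]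
    [NormedAddCommGroup F] [NormedSpace ℝ F] {ψ : E → F} {U : Set E} (hU : IsOpen U)
    (hcont : ContinuousOn ψ (closure U)) (hdiff : DifferentiableOn ℝ ψ U) {p q : E}
    (hseg : ∀ θ ∈ Ico (0 : ℝ) 1, lineMap p q θ ∈ U)
    (hderiv : ∀ r ∈ U, fderiv ℝ ψ r (q - p) = 0) : ψ q = ψ p := by
  have hmaps : MapsTo (lineMap p q) (Icc (0 : ℝ) 1) (closure U) := by
    rw [← closure_Ico zero_ne_one]
    exact fun θ hθ => map_mem_closure lineMap_continuous hθ hseg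
  have hconst := constant_of_has_deriv_right_zero (hcont.comp lineMap_continuous.continuousOn hmaps)
    (fun θ hθ => ?_) 1 (right_mem_Icc.2 zero_le_one)
  · simpa using hconst
  have hψ := (hdiff.differentiableAt (hU.mem_nhds (hseg θ hθ))).hasFDerivAt
  simpa [hderiv _ (hseg θ hθ)] using (hψ.comp_hasDerivAt θ hasDerivAt_lineMap).hasDerivWithinAt

theorem Transport.fderiv_apply_eq_zero {N : ℕ} {s : Fin N → ℝ} {U : Set (Fin N → ℝ × ℝ)}
    {ψ : (Fin N → ℝ × ℝ) → ℂ} (h : Transport s U ψ) {p : Fin N → ℝ × ℝ} (hp : p ∈ U)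
    (x : Fin N → ℝ) : fderiv ℝ ψ p (fun k => (x k, -(s k * x k))) = 0 := by
  have hsplit : (fun k => (x k, -(s k * x k))) =
      ∑ k, (x k • (Pi.single k ((1 : ℝ), (0 : ℝ)) : Fin N → ℝ × ℝ)
        + (-(s k * x k)) • (Pi.single k ((0 : ℝ), (1 : ℝ)) : Fin N → ℝ × ℝ)) := by
    ext k <;> simp [Finset.sum_apply, Pi.single_apply, Prod.fst_sum, Prod.snd_sum,
      apply_ite Prod.fst, apply_ite Prod.snd]
  rw [hsplit, map_sum]
  refine Finset.sum_eq_zero fun k _ => ?_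
  rw [map_add, map_smul, map_smul, h p hp k, smul_smul, ← add_smul, mul_comm, add_neg_cancel,
    zero_smul]

theorem sq_lt_mul_of_mul_eq_sq {α A X Y θ : ℝ} (hα : 0 ≤ α) (hA : α < A) (hXY : X * Y = α ^ 2)
    (hsum : 0 ≤ X + Y) (hθ₀ : 0 ≤ θ) (hθ₁ : θ < 1) :
    α ^ 2 < (A + θ * (X - A)) * (A + θ * (Y - A)) := by
  have hsum' : 2 * α ≤ X + Y := by nlinarith [sq_nonneg (X - Y)]
  calc α ^ 2 < ((1 - θ) * A + θ * α) ^ 2 := by gcongr; nlinarith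
    _ ≤ (A + θ * (X - A)) * (A + θ * (Y - A)) := by
      have := mul_nonneg (mul_nonneg (mul_nonneg (sub_nonneg.2 hθ₁.le) hθ₀) (hα.trans hA.le))
        (sub_nonneg.2 hsum')
      linear_combination this - θ ^ 2 * hXY

theorem isOpen_Salpha (α : ℝ) : IsOpen (Salpha α) :=
  isOpen_lt (by fun_prop) continuous_const

/-- `(d₂ - c₁)(c₂ - d₁) = α²` says that the `+−` characteristic through `(0, c₁, 0, c₂)` and the
`−+` characteristic through `(0, d₁, 0, d₂)` meet on `∂S_α`. -/
def ReflectionRelation (α : ℝ) (E : ℂ) (P M : ℝ → ℝ → ℂ) : Prop :=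
  ∀ ⦃c₁ c₂ d₁ d₂ : ℝ⦄, α < c₂ - c₁ → α < d₂ - d₁ → (d₂ - c₁) * (c₂ - d₁) = α ^ 2 →
    P c₁ c₂ = E * M d₁ d₂

theorem reflectionRelation_initialValues {α : ℝ} (hα : 0 ≤ α) {E : ℂ}
    {ψP ψM : (Fin 2 → ℝ × ℝ) → ℂ}
    (hcontP : ContinuousOn ψP (closure (Salpha α))) (hdiffP : DifferentiableOn ℝ ψP (Salpha α))
    (htrP : Transport (fun k => sgn (![true, false] k)) (Salpha α) ψP)
    (hcontM : ContinuousOn ψM (closure (Salpha α))) (hdiffM : DifferentiableOn ℝ ψM (Salpha α))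
    (htrM : Transport (fun k => sgn (![false, true] k)) (Salpha α) ψM)
    (hbc : ∀ p ∈ bdrySalpha α, ψP p = E * ψM p) :
    ReflectionRelation α E (fun c₁ c₂ => ψP ![(0, c₁), (0, c₂)])
      (fun d₁ d₂ => ψM ![(0, d₁), (0, d₂)]) := by
  intro c₁ c₂ d₁ d₂ hc hd hcd
  beta_reduce
  -- the point with light-cone coordinates `u₁ = c₁`, `v₂ = c₂`, `v₁ = d₁`, `u₂ = d₂`
  set q : Fin 2 → ℝ × ℝ := ![((c₁ - d₁) / 2, (c₁ + d₁) / 2), ((d₂ - c₂) / 2, (d₂ + c₂) / 2)]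
  have hq : q ∈ bdrySalpha α := by
    simp only [bdrySalpha, mem_ofPred_eq, q, Matrix.cons_val_zero, Matrix.cons_val_one]
    linear_combination -hcd
  have hP : ψP q = ψP ![(0, c₁), (0, c₂)] := by
    refine eq_of_fderiv_apply_sub_eq_zero (isOpen_Salpha α) hcontP hdiffP (fun θ hθ => ?_)
      (fun r hr => ?_)
    · have := sq_lt_mul_of_mul_eq_sq hα hc hcd (by linarith) hθ.1 hθ.2
      simp only [Salpha, mem_ofPred_eq, q, lineMap_apply_module, Matrix.smul_cons, Prod.smul_mk,
        smul_eq_mul, mul_zero, Matrix.smul_empty, Matrix.add_cons, Prod.mk_add_mk, zero_add,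
        Matrix.empty_add_empty, Matrix.cons_val_zero, Matrix.cons_val_one, Matrix.head_cons,
        Matrix.tail_cons]
      linarith
    · convert htrP.fderiv_apply_eq_zero hr ![(c₁ - d₁) / 2, (d₂ - c₂) / 2] using 2
      ext k <;> fin_cases k <;> simp [q, sgn] <;> ring
  have hM : ψM q = ψM ![(0, d₁), (0, d₂)] := by
    refine eq_of_fderiv_apply_sub_eq_zero (isOpen_Salpha α) hcontM hdiffM (fun θ hθ => ?_)
      (fun r hr => ?_)
    · have := sq_lt_mul_of_mul_eq_sq hα hd hcd (by linarith) hθ.1 hθ.2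
      simp only [Salpha, mem_ofPred_eq, q, lineMap_apply_module, Matrix.smul_cons, Prod.smul_mk,
        smul_eq_mul, mul_zero, Matrix.smul_empty, Matrix.add_cons, Prod.mk_add_mk, zero_add,
        Matrix.empty_add_empty, Matrix.cons_val_zero, Matrix.cons_val_one, Matrix.head_cons,
        Matrix.tail_cons]
      linarith
    · convert htrM.fderiv_apply_eq_zero hr ![(c₁ - d₁) / 2, (d₂ - c₂) / 2] using 2
      ext k <;> fin_cases k <;> simp [q, sgn] <;> ring
  rw [← hP, ← hM, hbc q hq]

namespace ReflectionRelation

variable {α : ℝ} {E : ℂ} {P M : ℝ → ℝ → ℂ}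

theorem left_apply_add_of_sq_lt (h : ReflectionRelation α E P M) {c₁ c₂ τ : ℝ}
    (hc : α < c₂ - c₁) (hτ : (c₂ - c₁ + α) ^ 2 < τ ^ 2 + 4 * α ^ 2) :
    P (c₁ + τ) (c₂ + τ) = P c₁ c₂ := by
  -- `(c₂ - (r - τ) / 2, c₁ + (r + τ) / 2)` is related to both `(c₁, c₂)` and its translate
  set r := √(τ ^ 2 + 4 * α ^ 2)
  have hr : r ^ 2 = τ ^ 2 + 4 * α ^ 2 := Real.sq_sqrt (by positivity)
  have hcr : c₂ - c₁ + α < r := Real.lt_sqrt_of_sq_lt hτ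
  rw [h (c₁ := c₁ + τ) (d₁ := c₂ - (r - τ) / 2) (d₂ := c₁ + (r + τ) / 2) (by linarith)
    (by linarith) (by linear_combination hr / 4),
    h (d₁ := c₂ - (r - τ) / 2) (d₂ := c₁ + (r + τ) / 2) hc (by linarith)
    (by linear_combination hr / 4)]

theorem left_apply_add (h : ReflectionRelation α E P M) {c₁ c₂ : ℝ} (hc : α < c₂ - c₁) (τ : ℝ) :
    P (c₁ + τ) (c₂ + τ) = P c₁ c₂ := by
  set L := |τ| + |c₂ - c₁ + α| + 1
  have hL : (c₂ - c₁ + α) ^ 2 < L ^ 2 := by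
    rw [← sq_abs (c₂ - c₁ + α)]
    exact pow_lt_pow_left₀ (by linarith [abs_nonneg τ]) (abs_nonneg _) two_ne_zero
  have hτL : (c₂ - c₁ + α) ^ 2 < (τ + L) ^ 2 := by
    rw [← sq_abs (c₂ - c₁ + α)]
    exact pow_lt_pow_left₀ (by linarith [neg_abs_le τ]) (abs_nonneg _) two_ne_zero
  rw [← h.left_apply_add_of_sq_lt (τ := L) (by linarith) (by nlinarith), add_assoc, add_assoc,
    h.left_apply_add_of_sq_lt hc (by nlinarith)]

theorem left_eq_mul_right (h : ReflectionRelation α E P M) (hα : 0 ≤ α) {c₁ c₂ d₁ d₂ : ℝ}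
    (hc : α < c₂ - c₁) (hd : α < d₂ - d₁) : P c₁ c₂ = E * M d₁ d₂ := by
  set S := c₂ - c₁ + (d₂ - d₁)
  set w := √(S ^ 2 - 4 * α ^ 2)
  have hw : w ^ 2 = S ^ 2 - 4 * α ^ 2 := Real.sq_sqrt (by nlinarith)
  rw [← h.left_apply_add hc (d₁ - c₂ + (S + w) / 2)]
  exact h (by linarith) hd (by linear_combination -hw / 4)

theorem left_apply_eq (h : ReflectionRelation α E P M) (hα : 0 ≤ α) {c₁ c₂ c₁' c₂' : ℝ}
    (hc : α < c₂ - c₁) (hc' : α < c₂' - c₁') : P c₁ c₂ = P c₁' c₂' := by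
  rw [h.left_eq_mul_right hα hc (d₁ := 0) (d₂ := α + 1) (by linarith),
    h.left_eq_mul_right hα hc' (d₁ := 0) (d₂ := α + 1) (by linarith)]

theorem right_apply_eq (h : ReflectionRelation α E P M) (hα : 0 ≤ α) (hE : E ≠ 0)
    {d₁ d₂ d₁' d₂' : ℝ} (hd : α < d₂ - d₁) (hd' : α < d₂' - d₁') : M d₁ d₂ = M d₁' d₂' := by
  refine mul_left_cancel₀ hE ?_
  rw [← h.left_eq_mul_right hα (c₁ := 0) (c₂ := α + 1) (by linarith) hd,
    ← h.left_eq_mul_right hα (c₁ := 0) (c₂ := α + 1) (by linarith) hd']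

end ReflectionRelation

theorem stmt16_general (α : ℝ) (hα : 0 < α) (φ : ℝ)
    (g : (Fin 2 → Bool) → ℝ → ℝ → ℂ)
    (a1 b1 a2 b2 : ℝ)
    (ha : α < a2 - a1) (hb : α < b2 - b1)
    (hg : g ![true, false] a1 a2 ≠ g ![true, false] b1 b2 ∨
          g ![false, true] a1 a2 ≠ g ![false, true] b1 b2) :
    ¬ ∃ ψ : (Fin 2 → Bool) → (Fin 2 → ℝ × ℝ) → ℂ,
      (∀ s, ContinuousOn (ψ s) (closure (Salpha α))) ∧
      (∀ s, ContDiffOn ℝ 1 (ψ s) (Salpha α)) ∧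
      (∀ s, Transport (fun k => sgn (s k)) (Salpha α) (ψ s)) ∧
      (∀ p ∈ bdrySalpha α,
        ψ ![true, false] p = Complex.exp (Complex.I * (φ : ℂ)) * ψ ![false, true] p) ∧
      (∀ s, ∀ z1 z2 : ℝ, α < |z1 - z2| →
        ψ s ![((0 : ℝ), z1), ((0 : ℝ), z2)] = g s z1 z2) := by
  rintro ⟨ψ, hcont, hdiff, htr, hbc, hic⟩
  have hinit : ∀ s z₁ z₂, α < z₂ - z₁ → ψ s ![(0, z₁), (0, z₂)] = g s z₁ z₂ := fun s z₁ z₂ hz =>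
    hic s z₁ z₂ (by rw [abs_sub_comm]; exact hz.trans_le (le_abs_self _))
  have hR : ReflectionRelation α (Complex.exp (Complex.I * φ)) (g ![true, false])
      (g ![false, true]) := fun c₁ c₂ d₁ d₂ hc hd hcd => by
    rw [← hinit _ _ _ hc, ← hinit _ _ _ hd]
    exact reflectionRelation_initialValues hα.le (hcont _) ((hdiff _).differentiableOn one_ne_zero)
      (htr _) (hcont _) ((hdiff _).differentiableOn one_ne_zero) (htr _) hbc hc hd hcd
  rcases hg with hne | hne
  · exact hne (hR.left_apply_eq hα.le ha hb)
  · exact hne (hR.right_apply_eq hα.le (Complex.exp_ne_zero _) ha hb)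

/-- non-existence of dynamics on `α`-space-like configurations: if the
initial data `(g_s)` take different values at two configurations `(a₁,a₂)`, `(b₁,b₂)`
(with `a₁ < b₁ < a₂ < b₂`, `a₂ − a₁ > α`, `b₂ − b₁ > α`) in the component `+−` or `−+`,
then there is no family `(ψ_s)`, continuous on the closure of `S_α`, `C¹` on `S_α`,
satisfying the multi-time transport equations on `S_α`, the boundary condition
`ψ_{+−} = e^{iφ} ψ_{−+}` on `∂S_α`, and the initial conditions
`ψ_s(0,z₁,0,z₂) = g_s(z₁,z₂)` for `|z₁ − z₂| > α`. -/
theorem stmt16 (α : ℝ) (hα : 0 < α) (φ : ℝ)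
    (g : (Fin 2 → Bool) → ℝ → ℝ → ℂ)
    (a1 b1 a2 b2 : ℝ) (hab1 : a1 < b1) (hab2 : b1 < a2) (hab3 : a2 < b2)
    (ha : α < a2 - a1) (hb : α < b2 - b1)
    (hg : g ![true, false] a1 a2 ≠ g ![true, false] b1 b2 ∨
          g ![false, true] a1 a2 ≠ g ![false, true] b1 b2) :
    ¬ ∃ ψ : (Fin 2 → Bool) → (Fin 2 → ℝ × ℝ) → ℂ,
      (∀ s, ContinuousOn (ψ s) (closure (Salpha α))) ∧
      (∀ s, ContDiffOn ℝ 1 (ψ s) (Salpha α)) ∧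
      (∀ s, Transport (fun k => sgn (s k)) (Salpha α) (ψ s)) ∧
      (∀ p ∈ bdrySalpha α,
        ψ ![true, false] p = Complex.exp (Complex.I * (φ : ℂ)) * ψ ![false, true] p) ∧
      (∀ s, ∀ z1 z2 : ℝ, α < |z1 - z2| →
        ψ s ![((0 : ℝ), z1), ((0 : ℝ), z2)] = g s z1 z2) :=
  stmt16_general α hα φ g a1 b1 a2 b2 ha hb hg
end
end
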